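/- arXiv:2001.07083 — 3 statements merged into one kernel-verified Lean document; each statement's English description precedes it below -/
import Mathlib

section
/- Let R be a commutative ring, m a natural number, and A, B ∈ Mat_m(R). Then the characteristic polynomial of the 2m×2m block matrix X = [[0, A], [B, 0]] satisfies det(λ·I_{2m} − X) = det(λ²·I_m − A·B) for every λ (as an identity of polynomials in λ). -/
open Polynomial Matrix in
private lemma aux_blocks {R : Type*} [CommRing R] (m : ℕ)
    (A B : Matrix (Fin m) (Fin m) R) :
    (Matrix.fromBlocks ((X : R[X]) • 1) (-(A.map C)) (-(B.map C)) ((X : R[X]) • 1)) *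
      Matrix.fromBlocks ((X : R[X]) • 1) 0 (B.map C) 1 =
      Matrix.fromBlocks ((X : R[X]) ^ 2 • 1 - (A.map C) * (B.map C)) (-(A.map C)) 0
        ((X : R[X]) • 1) := by
  rw [Matrix.fromBlocks_multiply]
  have h11 : ((X : R[X]) • 1) * ((X : R[X]) • 1) + (-(A.map C)) * (B.map C)
      = (X : R[X]) ^ 2 • 1 - (A.map C) * (B.map C) := by
    simp [Matrix.smul_mul, Matrix.mul_smul, smul_smul, sq, sub_eq_add_neg]
  have h12 : ((X : R[X]) • 1) * 0 + (-(A.map C)) * 1 = -(A.map C) := by simp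
  have h21 : (-(B.map C)) * ((X : R[X]) • 1) + ((X : R[X]) • 1) * (B.map C) = 0 := by
    simp [Matrix.smul_mul, Matrix.mul_smul]
  have h22 : (-(B.map C)) * (0 : Matrix (Fin m) (Fin m) R[X]) + ((X : R[X]) • 1) * 1
      = (X : R[X]) • 1 := by simp
  rw [h11, h12, h21, h22]

open Polynomial Matrix in
private lemma aux_rhs {R : Type*} [CommRing R] (m : ℕ)
    (A B : Matrix (Fin m) (Fin m) R) :
    (A * B).charpoly.comp (X ^ 2) =
      Matrix.det ((X : R[X]) ^ 2 • 1 - (A.map C) * (B.map C)) := by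
  have hab : (A.map C) * (B.map C) = (A * B).map (C : R →+* R[X]) := by
    rw [Matrix.map_mul]
  have h1 : (A * B).charpoly.comp (X ^ 2) =
      (Polynomial.eval₂RingHom C (X ^ 2 : R[X])) (A * B).charpoly := by
    simp [Polynomial.comp]
  rw [h1, Matrix.charpoly, RingHom.map_det, hab]
  congr 1
  refine Matrix.ext fun i j => ?_
  simp only [RingHom.mapMatrix_apply, Matrix.map_apply, Matrix.charmatrix_apply,
    Matrix.diagonal_apply, Matrix.sub_apply, Matrix.smul_apply, Matrix.one_apply,
    coe_eval₂RingHom, eval₂_sub, eval₂_C, smul_eq_mul]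
  by_cases h : i = j <;> simp [h]

/-- For a commutative ring `R` and `A, B ∈ Mat_m(R)`, the characteristic
polynomial of the block matrix `[[0, A], [B, 0]]` equals `det(λ²·I − A·B)`, i.e. the
characteristic polynomial of `A·B` composed with `λ²`. -/
theorem stmt0 {R : Type*} [CommRing R] (m : ℕ)
    (A B : Matrix (Fin m) (Fin m) R) :
    (Matrix.fromBlocks 0 A B 0).charpoly =
      (A * B).charpoly.comp (Polynomial.X ^ 2) := by
  classical
  open Polynomial Matrix in
  have hchar : (Matrix.fromBlocks (0 : Matrix (Fin m) (Fin m) R) A B 0).charmatrix =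
      Matrix.fromBlocks ((X : R[X]) • 1) (-(A.map C)) (-(B.map C)) ((X : R[X]) • 1) := by
    rw [Matrix.charmatrix_fromBlocks]
    congr 1 <;> simp [Matrix.charmatrix, Matrix.scalar_apply, Matrix.smul_eq_diagonal_mul]
  have hdet := congrArg Matrix.det (aux_blocks m A B)
  rw [Matrix.det_mul, Matrix.det_fromBlocks_zero₁₂, Matrix.det_fromBlocks_zero₂₁] at hdet
  have hsmul : Matrix.det (((X : Polynomial R) • 1 :
      Matrix (Fin m) (Fin m) (Polynomial R))) = (X : Polynomial R) ^ m := by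
    simp [Matrix.det_smul]
  rw [hsmul, Matrix.det_one, mul_one] at hdet
  have hreg : IsRightRegular ((X : Polynomial R) ^ m) :=
    (Polynomial.monic_X_pow m).isRegular.right
  rw [Matrix.charpoly, hchar, aux_rhs m A B]
  exact hreg hdet
end

section
/- Let F be a field, n₁, n₂ natural numbers, and Y₁ ∈ Mat_{n₁}(F), Y₂ ∈ Mat_{n₂}(F). If the characteristic polynomials of Y₁² and Y₂² are coprime in F[λ], then the F-linear map on Mat_{n₁×n₂}(F) sending n ↦ Y₁·n − n·Y₂ is bijective. -/
private lemma aux_intertwine {F : Type*} [Field F] {n₁ n₂ : ℕ}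
    {A : Matrix (Fin n₁) (Fin n₁) F} {B : Matrix (Fin n₂) (Fin n₂) F}
    {n : Matrix (Fin n₁) (Fin n₂) F} (hAB : A * n = n * B) (p : Polynomial F) :
    (Polynomial.aeval A) p * n = n * (Polynomial.aeval B) p := by
  induction p using Polynomial.induction_on' with
  | add p q hp hq =>
    simp [map_add, Matrix.add_mul, Matrix.mul_add, hp, hq]
  | monomial k c =>
    have hpow : ∀ k : ℕ, A ^ k * n = n * B ^ k := by
      intro k
      induction k with
      | zero => simp
      | succ k ih =>
        rw [pow_succ, pow_succ, Matrix.mul_assoc, hAB, ← Matrix.mul_assoc, ih, Matrix.mul_assoc]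
    simp [Polynomial.aeval_monomial, Matrix.smul_mul, Matrix.mul_smul, hpow k,
      Algebra.algebraMap_eq_smul_one, smul_mul_assoc, mul_smul_comm]

/-- If the characteristic polynomials of `Y₁²` and `Y₂²` are coprime in
`F[λ]`, then `n ↦ Y₁·n − n·Y₂` is a bijection of `Mat_{n₁×n₂}(F)`. -/
theorem stmt3 {F : Type*} [Field F] (n₁ n₂ : ℕ)
    (Y₁ : Matrix (Fin n₁) (Fin n₁) F) (Y₂ : Matrix (Fin n₂) (Fin n₂) F)
    (h : IsCoprime (Y₁ ^ 2).charpoly (Y₂ ^ 2).charpoly) :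
    Function.Bijective
      (fun n : Matrix (Fin n₁) (Fin n₂) F => Y₁ * n - n * Y₂) := by
  let L : Matrix (Fin n₁) (Fin n₂) F →ₗ[F] Matrix (Fin n₁) (Fin n₂) F :=
    { toFun := fun n => Y₁ * n - n * Y₂
      map_add' := fun a b => by simp [Matrix.mul_add, Matrix.add_mul]; abel
      map_smul' := fun c a => by simp [Matrix.mul_smul, Matrix.smul_mul, smul_sub] }
  have hinj : Function.Injective L := by
    rw [← LinearMap.ker_eq_bot, LinearMap.ker_eq_bot']
    intro n hn
    have h1 : Y₁ * n = n * Y₂ := by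
      have : Y₁ * n - n * Y₂ = 0 := hn
      linear_combination (norm := module) this
    have h2 : Y₁ ^ 2 * n = n * Y₂ ^ 2 := by
      rw [pow_two, pow_two, Matrix.mul_assoc, h1, ← Matrix.mul_assoc, h1, Matrix.mul_assoc]
    obtain ⟨a, b, hab⟩ := h
    have key := congrArg (Polynomial.aeval (Y₁ ^ 2)) hab
    simp only [map_add, map_mul, map_one, Matrix.aeval_self_charpoly, mul_zero,
      zero_add] at key
    calc n = ((Polynomial.aeval (Y₁ ^ 2)) b * (Polynomial.aeval (Y₁ ^ 2)) (Y₂ ^ 2).charpoly) * n := by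
              rw [key, Matrix.one_mul]
      _ = (Polynomial.aeval (Y₁ ^ 2)) b * ((Polynomial.aeval (Y₁ ^ 2)) (Y₂ ^ 2).charpoly * n) := by
              rw [Matrix.mul_assoc]
      _ = (Polynomial.aeval (Y₁ ^ 2)) b * (n * (Polynomial.aeval (Y₂ ^ 2)) (Y₂ ^ 2).charpoly) := by
              rw [aux_intertwine h2]
      _ = 0 := by rw [Matrix.aeval_self_charpoly, Matrix.mul_zero, Matrix.mul_zero]
  have hbij : Function.Bijective L :=
    ⟨hinj, (LinearMap.injective_iff_surjective).mp hinj⟩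
  exact hbij
end

section
/- Let F be a field, D a finite-dimensional central division algebra over F, and E/F a quadratic field extension. If there exists no F-algebra homomorphism from E into D, then the E-algebra D ⊗_F E is a division algebra. -/
open scoped TensorProduct

/-!
A nonzero nonunit `x` of the finite-dimensional algebra `A = D ⊗[F] E` generates a proper nonzero
left ideal `A x`. As a left `D`-vector space `A` has dimension `[E : F] = 2`, so `A x` is a line,
and left multiplication by `E = 1 ⊗ E` acts on it `D`-linearly. Hence `E` maps into
`End_D (A x) ≅ Dᵐᵒᵖ`, which, `E` being commutative, is an `F`-algebra map `E → D`.
-/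

open Module

instance Submodule.smulCommClass_of_isScalarTower {R M S T : Type*} [Semiring R]
    [AddCommMonoid M] [Module R M] [SMul S R] [SMul S M] [IsScalarTower S R M] [SMul T R]
    [SMul T M] [IsScalarTower T R M] [SMulCommClass S T M] (p : Submodule R M) :
    SMulCommClass S T p :=
  ⟨fun s t m => Subtype.ext (smul_comm s t (m : M))⟩

theorem Submodule.span_singleton_ne_top_of_not_isUnit {A : Type*} [Ring A]
    [IsDedekindFiniteMonoid A] {x : A} (hx : ¬IsUnit x) : span A {x} ≠ ⊤ := by
  intro h
  obtain ⟨a, hax⟩ := mem_span_singleton.mp (h ▸ mem_top : (1 : A) ∈ span A {x})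
  exact hx (.of_mul_eq_one_right a hax)

theorem nonempty_algHom_of_finrank_eq_one {F D E M : Type*} [Field F] [DivisionRing D]
    [Algebra F D] [CommSemiring E] [Algebra F E] [AddCommGroup M] [Module D M] [Module E M]
    [Module F M] [IsScalarTower F D M] [IsScalarTower F E M] [SMulCommClass E D M]
    (h : finrank D M = 1) : Nonempty (E →ₐ[F] D) := by
  have : FiniteDimensional D M := Module.finite_of_finrank_eq_succ h
  let e : M ≃ₗ[D] D := LinearEquiv.ofFinrankEq M D (by rw [h, finrank_self])
  let toOpposite : E →ₐ[F] Dᵐᵒᵖ := (AlgEquiv.moduleEndSelf F).symm.toAlgHom.comp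
    ((e.conjAlgEquiv F).toAlgHom.comp (Algebra.lsmul F D M))
  exact ⟨(AlgHom.opComm toOpposite).comp (AlgEquiv.toOpposite F E).toAlgHom⟩

section

attribute [local instance] Algebra.TensorProduct.rightAlgebra

theorem Algebra.TensorProduct.nonempty_algHom_of_not_isUnit {F D E : Type*} [Field F]
    [DivisionRing D] [Algebra F D] [FiniteDimensional F D] [CommRing E] [Algebra F E]
    (hE : finrank F E = 2) {x : D ⊗[F] E} (hx : x ≠ 0) (hxu : ¬IsUnit x) :
    Nonempty (E →ₐ[F] D) := by
  have : FiniteDimensional F E := Module.finite_of_finrank_eq_succ hE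
  have : IsArtinianRing (D ⊗[F] E) := .of_finite F _
  set I := Submodule.span (D ⊗[F] E) {x}
  have hI_ne_top : I.restrictScalars D ≠ ⊤ := by
    simpa using Submodule.span_singleton_ne_top_of_not_isUnit hxu
  have hI_ne_bot : I.restrictScalars D ≠ ⊥ := by
    simpa [I] using hx
  have hlt : finrank D I < finrank D (D ⊗[F] E) := Submodule.finrank_lt hI_ne_top
  rw [finrank_baseChange, hE] at hlt
  have hpos : 1 ≤ finrank D I := Submodule.one_le_finrank_iff.mpr hI_ne_bot
  exact nonempty_algHom_of_finrank_eq_one (D := D) (M := I) (by omega)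

end

theorem stmt4_general {F D E : Type*} [Field F] [DivisionRing D] [Algebra F D]
    [FiniteDimensional F D]
    [Field E] [Algebra F E] (hE : Module.finrank F E = 2)
    (hemb : IsEmpty (E →ₐ[F] D)) :
    ∀ x : D ⊗[F] E, x ≠ 0 → IsUnit x := fun _ hx =>
  by_contra fun hxu =>
    hemb.false (Algebra.TensorProduct.nonempty_algHom_of_not_isUnit hE hx hxu).some

/-- Let `D` be a finite-dimensional central division algebra over a field
`F`, and `E/F` a quadratic field extension. If there is no `F`-algebra homomorphism
`E → D`, then `D ⊗_F E` is a division algebra (every nonzero element is invertible). -/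
theorem stmt4 {F D E : Type*} [Field F] [DivisionRing D] [Algebra F D]
    [FiniteDimensional F D]
    (hcentral : ∀ d : D, (∀ x : D, d * x = x * d) → ∃ a : F, algebraMap F D a = d)
    [Field E] [Algebra F E] (hE : Module.finrank F E = 2)
    (hemb : IsEmpty (E →ₐ[F] D)) :
    ∀ x : D ⊗[F] E, x ≠ 0 → IsUnit x :=
  stmt4_general hE hemb
end
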